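/- Let μ = Σ_{i=1}^m γ_i δ_{u_i} be a discrete Borel measure on S^{n-1} with distinct unit vectors u_i positively spanning R^n, γ_i > 0, Σ γ_i = 1. Then μ satisfies the subspace concentration condition if and only if γ = (γ_1,...,γ_m) lies in the relative interior of P_scc(U) = (1/n)·P(M_U). -/

import Mathlib

open MeasureTheory Module Submodule
open scoped RealInnerProductSpace Pointwise Classical

def IsBasisIndex {n m : ℕ} (U : Fin m → EuclideanSpace ℝ (Fin n)) (I : Finset (Fin m)) : Prop :=
  I.card = n ∧ Submodule.span ℝ (U '' ↑I) = ⊤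

noncomputable def matroidPolytope {n m : ℕ} (U : Fin m → EuclideanSpace ℝ (Fin n)) :
    Set (Fin m → ℝ) :=
  convexHull ℝ {x | ∃ I : Finset (Fin m), IsBasisIndex U I ∧
    x = fun j => if j ∈ I then (1 : ℝ) else 0}

def PosSpanning {n m : ℕ} (U : Fin m → EuclideanSpace ℝ (Fin n)) : Prop :=
  ∀ x : EuclideanSpace ℝ (Fin n),
    ∃ c : Fin m → ℝ, (∀ i, 0 ≤ c i) ∧ x = ∑ i, c i • U i

/-- The subspace concentration condition for the discrete measure `∑ γᵢ δ_{uᵢ}` (with total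
mass `1`): (i) for every proper subspace `L`, `∑_{uᵢ ∈ L} γᵢ ≤ dim L / n`, and (ii) equality
holds iff there is a complementary subspace `L'` with all `uᵢ` in `L ∪ L'`. -/
def SCC {n m : ℕ} (U : Fin m → EuclideanSpace ℝ (Fin n)) (γ : Fin m → ℝ) : Prop :=
  (∀ L : Submodule ℝ (EuclideanSpace ℝ (Fin n)), L ≠ ⊤ →
      ∑ i ∈ Finset.univ.filter (fun i => U i ∈ L), γ i ≤ (finrank ℝ L : ℝ) / n) ∧
    ∀ L : Submodule ℝ (EuclideanSpace ℝ (Fin n)), L ≠ ⊤ →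
      ((∑ i ∈ Finset.univ.filter (fun i => U i ∈ L), γ i = (finrank ℝ L : ℝ) / n) ↔
        ∃ L' : Submodule ℝ (EuclideanSpace ℝ (Fin n)), IsCompl L L' ∧
          ∀ i, U i ∈ L ∨ U i ∈ L')

/-
Edmonds: `(1/n)·P(M_U)` is the polytope `P_scc(U)` cut out by `∑_{i ∈ A} x_i ≤ rk A / n` and
`∑ x_i = 1`; a point outside is beaten, for any separating weight `c`, by the vertex of the basis
chosen greedily in order of decreasing `c`, by Abel summation.

A point of a polytope is in its relative interior iff it can be pushed a little beyond itself away
from any other point of the polytope, i.e. iff every inequality tight at it is tight on the whole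
polytope. If `γ` satisfies the subspace concentration condition and `γ > 0`, a tight set is the
flat `{i | u_i ∈ L}` of a subspace `L` with a complement `L'` such that every `u_i ∈ L ∪ L'`; the
inequality is then tight on all of `P_scc(U)`, since the indices outside `L` contribute at most
`dim L' / n = 1 - dim L / n`. Conversely, if the inequality of `L` is tight on all of `P_scc(U)`,
it is tight at the vertex of a basis `I` extending a basis of the vectors outside `L`; counting `I`
on both sides of `L` gives `dim L + dim (span of the vectors outside L) ≤ n`, so that span is a
complement of `L`.
-/

open Filter Topology Finset

section IntrinsicInterior

variable {E : Type*} [AddCommGroup E] [Module ℝ E] [TopologicalSpace E] [IsTopologicalAddGroup E]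
  [ContinuousSMul ℝ E]

theorem exists_add_smul_sub_mem_of_mem_intrinsicInterior {s : Set E} {x y : E}
    (hx : x ∈ intrinsicInterior ℝ s) (hy : y ∈ s) : ∃ ε : ℝ, 0 < ε ∧ x + ε • (x - y) ∈ s := by
  obtain ⟨x, hx, rfl⟩ := hx
  have : Nonempty (affineSpan ℝ s) := ⟨x⟩
  obtain ⟨δ, hδs, hδ⟩ := (((eventually_homothety_mem_of_mem_interior ℝ
    (⟨y, subset_affineSpan ℝ s hy⟩ : affineSpan ℝ s) hx).filter_mono nhdsWithin_le_nhds).and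
    (self_mem_nhdsWithin (s := Set.Ioi 1))).exists
  refine ⟨δ - 1, sub_pos.2 hδ, ?_⟩
  simpa [AffineMap.homothety_apply, show δ • ((x : E) - y) + y = x + (δ - 1) • (x - y) by module]
    using hδs

theorem eq_of_mem_intrinsicInterior_of_forall_le (f : E →ₗ[ℝ] ℝ) {s : Set E} {x y : E}
    (hx : x ∈ intrinsicInterior ℝ s) (hmax : ∀ z ∈ s, f z ≤ f x) (hy : y ∈ s) : f y = f x := by
  obtain ⟨ε, hε, hz⟩ := exists_add_smul_sub_mem_of_mem_intrinsicInterior hx hy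
  have := hmax _ hz
  simp only [map_add, map_smul, map_sub, smul_eq_mul] at this
  nlinarith [hmax y hy]

theorem Convex.mem_intrinsicInterior_of_forall_exists_add_smul_sub_mem {E : Type*}
    [NormedAddCommGroup E] [NormedSpace ℝ E] [FiniteDimensional ℝ E] {s : Set E}
    (hs : Convex ℝ s) {x : E} (hx : x ∈ s) (h : ∀ y ∈ s, ∃ ε : ℝ, 0 < ε ∧ x + ε • (x - y) ∈ s) :
    x ∈ intrinsicInterior ℝ s := by
  obtain ⟨_, w, hw, rfl⟩ := Set.Nonempty.intrinsicInterior hs ⟨x, hx⟩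
  obtain ⟨ε, hε, hz⟩ := h w (intrinsicInterior_subset ⟨w, hw, rfl⟩)
  have : Nonempty (affineSpan ℝ s) := ⟨w⟩
  set t := ε / (1 + ε)
  have ht : t ∈ Set.Icc (0 : ℝ) 1 := ⟨by positivity, (div_le_one (by positivity)).2 (by linarith)⟩
  -- `x = z + t • (w - z)`, and the homothety at `z` of ratio `t` maps `s` into itself
  let f := AffineMap.homothety (⟨_, subset_affineSpan ℝ s hz⟩ : affineSpan ℝ s) t
  have hf : f '' ((↑) ⁻¹' s) ⊆ (↑) ⁻¹' s := by
    rintro _ ⟨p, hp, rfl⟩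
    simpa [f, AffineMap.homothety_apply, add_comm] using hs.add_smul_sub_mem hz hp ht
  have hfw : f w = ⟨x, subset_affineSpan ℝ s hx⟩ := by
    have htε : t * (1 + ε) = ε := div_mul_cancel₀ _ (by positivity)
    ext
    calc t • ((w : E) - (x + ε • (x - w))) + (x + ε • (x - w))
        = x + (ε - t * (1 + ε)) • (x - w) := by module
      _ = x := by rw [htε, sub_self, zero_smul, add_zero]
  refine ⟨⟨x, subset_affineSpan ℝ s hx⟩, ?_, rfl⟩
  rw [← hfw]
  exact interior_mono hf ((AffineMap.homothety_isOpenMap _ t (by positivity)).image_interior_subset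
    _ ⟨w, hw, rfl⟩)

end IntrinsicInterior

theorem exists_pos_forall_add_smul_sub_le {E κ : Type*} [AddCommGroup E] [Module ℝ E] [Finite κ]
    (f : κ → E →ₗ[ℝ] ℝ) (b : κ → ℝ) {x y : E} (hx : ∀ k, f k x ≤ b k)
    (hy : ∀ k, f k x = b k → f k y = b k) :
    ∃ ε : ℝ, 0 < ε ∧ ∀ k, f k (x + ε • (x - y)) ≤ b k := by
  have hev : ∀ k, ∀ᶠ ε in 𝓝[>] (0 : ℝ), f k (x + ε • (x - y)) ≤ b k := by
    intro k
    simp only [map_add, map_smul, map_sub, smul_eq_mul]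
    rcases (hx k).eq_or_lt with hk | hk
    · simp [hk, hy k hk]
    · have : Tendsto (fun ε : ℝ => f k x + ε * (f k x - f k y)) (𝓝 0) (𝓝 (f k x)) := by
        simpa using ((continuous_mul_const (f k x - f k y)).const_add (f k x)).tendsto 0
      exact ((this.eventually (gt_mem_nhds hk)).filter_mono nhdsWithin_le_nhds).mono
        fun _ => le_of_lt
  obtain ⟨ε, hε, hε0⟩ := ((eventually_all.2 hev).and self_mem_nhdsWithin).exists
  exact ⟨ε, hε0, hε⟩

section FamilyRank

variable {K V ι : Type*} [DivisionRing K] [AddCommGroup V] [Module K V] {v : ι → V}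

theorem LinearIndepOn.card_eq_finrank_image {J : Finset ι} (hJ : LinearIndepOn K v ↑J) :
    J.card = (v '' ↑J).finrank K := by
  rw [Set.image_eq_range, ← Fintype.card_coe]
  exact linearIndependent_iff_card_eq_finrank_span.1 hJ

theorem LinearIndepOn.card_eq_finrank_image_of_subset_span {I A : Finset ι}
    (hI : LinearIndepOn K v ↑I) (hIA : I ⊆ A) (hA : v '' ↑A ⊆ span K (v '' ↑I)) :
    I.card = (v '' ↑A).finrank K := by
  rw [hI.card_eq_finrank_image, Set.finrank, Set.finrank,
    le_antisymm (span_mono (Set.image_mono hIA)) (span_le.2 hA)]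

theorem finrank_image_le_finrank_of_forall_mem [FiniteDimensional K V] {A : Set ι}
    {L : Submodule K V} (hA : ∀ i ∈ A, v i ∈ L) : (v '' A).finrank K ≤ finrank K L :=
  Submodule.finrank_mono (span_le.2 (Set.image_subset_iff.2 hA))

theorem LinearIndepOn.card_inter_le_finrank_image [DecidableEq ι] [FiniteDimensional K V]
    {I : Finset ι} (hI : LinearIndepOn K v ↑I) (A : Finset ι) :
    (A ∩ I).card ≤ (v '' ↑A).finrank K := by
  rw [(hI.mono (by simp)).card_eq_finrank_image]
  exact Set.finrank_mono (Set.image_mono (by simp))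

variable (K v) in
theorem subset_filter_mem_span_image [Fintype ι] (A : Finset ι) :
    A ⊆ univ.filter (fun i => v i ∈ span K (v '' ↑A)) :=
  fun i hi => by simpa using subset_span (Set.mem_image_of_mem v hi)

theorem exists_linearIndepOn_finset_extension [Fintype ι] {J A : Finset ι}
    (hJ : LinearIndepOn K v ↑J) (hJA : J ⊆ A) :
    ∃ I : Finset ι, J ⊆ I ∧ I ⊆ A ∧ LinearIndepOn K v ↑I ∧ v '' ↑A ⊆ span K (v '' ↑I) := by
  classical
  obtain ⟨I, hIA, hJI, hspan, hI⟩ := exists_linearIndepOn_extension hJ (coe_subset.2 hJA)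
  exact ⟨I.toFinset, by simpa [← coe_subset], by simpa [← coe_subset], by simpa,
    by simpa using hspan⟩

theorem exists_linearIndepOn_forall_subset_span_inter [Fintype ι] [DecidableEq ι]
    {A : ℕ → Finset ι} (hA : Monotone A) (N : ℕ) : ∃ I : Finset ι, I ⊆ A N ∧ LinearIndepOn K v ↑I ∧
      ∀ k ≤ N, v '' ↑(A k) ⊆ span K (v '' ↑(A k ∩ I)) := by
  induction N with
  | zero =>
    obtain ⟨I, -, hIA, hI, hspan⟩ :=
      exists_linearIndepOn_finset_extension (K := K) (v := v) (by simp) (empty_subset (A 0))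
    refine ⟨I, hIA, hI, fun k hk => ?_⟩
    rwa [Nat.le_zero.1 hk, inter_eq_right.2 hIA]
  | succ N ih =>
    obtain ⟨J, hJA, hJ, hJspan⟩ := ih
    obtain ⟨I, hJI, hIA, hI, hspan⟩ :=
      exists_linearIndepOn_finset_extension hJ (hJA.trans (hA N.le_succ))
    refine ⟨I, hIA, hI, fun k hk => ?_⟩
    rcases hk.lt_or_eq with hk | rfl
    · exact (hJspan k (Nat.lt_succ_iff.1 hk)).trans
        (span_mono (Set.image_mono (by gcongr)))
    · rwa [inter_eq_right.2 hIA]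

end FamilyRank

theorem Submodule.isCompl_of_sup_eq_top_of_finrank_add_le {K V : Type*} [DivisionRing K]
    [AddCommGroup V] [Module K V] [FiniteDimensional K V] {L L' : Submodule K V}
    (hsup : L ⊔ L' = ⊤) (hdim : finrank K L + finrank K L' ≤ finrank K V) : IsCompl L L' := by
  have h := Submodule.finrank_sup_add_finrank_inf_eq L L'
  rw [hsup, finrank_top] at h
  exact ⟨disjoint_iff.2 (Submodule.finrank_eq_zero.1 (by omega)), codisjoint_iff.2 hsup⟩

theorem sum_range_mul_le_sum_range_mul_of_antitoneOn {p : ℕ} {d u v : ℕ → ℝ}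
    (hd : AntitoneOn d (Set.Iio p))
    (hpart : ∀ k < p, ∑ j ∈ range k, u j ≤ ∑ j ∈ range k, v j)
    (htot : ∑ j ∈ range p, u j = ∑ j ∈ range p, v j) :
    ∑ j ∈ range p, d j * u j ≤ ∑ j ∈ range p, d j * v j := by
  have hu := sum_range_by_parts d u p
  have hv := sum_range_by_parts d v p
  simp only [smul_eq_mul] at hu hv
  rw [hu, hv, htot]
  refine sub_le_sub_left (sum_le_sum fun k hk => ?_) _
  rw [mem_range] at hk
  exact mul_le_mul_of_nonpos_left (hpart _ (by omega))
    (sub_nonpos.2 (hd (by simp; omega) (by simp; omega) (by omega)))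

theorem Fin.sum_mul_le_sum_mul_of_antitone {m : ℕ} {d u v : Fin m → ℝ} (hd : Antitone d)
    (hpart : ∀ k < m,
      ∑ i ∈ {i : Fin m | (i : ℕ) < k}, u i ≤ ∑ i ∈ {i : Fin m | (i : ℕ) < k}, v i)
    (htot : ∑ i, u i = ∑ i, v i) : ∑ i, d i * u i ≤ ∑ i, d i * v i := by
  let ext : (Fin m → ℝ) → ℕ → ℝ := fun g j => if h : j < m then g ⟨j, h⟩ else 0
  have hpre : ∀ g k, k ≤ m → ∑ i ∈ {i : Fin m | (i : ℕ) < k}, g i = ∑ j ∈ range k, ext g j := by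
    intro g k hk
    refine sum_nbij (fun i => (i : ℕ)) (by simp) Fin.val_injective.injOn
      (fun j hj => ⟨⟨j, by simp at hj; omega⟩, by simpa using hj, rfl⟩) (fun i _ => by simp [ext])
  have hmul : ∀ g : Fin m → ℝ, ∑ i, d i * g i = ∑ j ∈ range m, ext d j * ext g j := by
    intro g
    rw [← Fin.sum_univ_eq_sum_range]
    simp [ext]
  have hfull : ∀ g, ∑ i, g i = ∑ j ∈ range m, ext g j := fun g => by
    simpa using hpre g m le_rfl
  rw [hmul, hmul]
  refine sum_range_mul_le_sum_range_mul_of_antitoneOn ?_ (fun k hk => ?_) ?_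
  · intro i hi j hj hij
    simp only [Set.mem_Iio] at hi hj
    simp only [ext, dif_pos hi, dif_pos hj]
    exact hd (Fin.mk_le_mk.2 hij)
  · rw [← hpre u k hk.le, ← hpre v k hk.le]
    exact hpart k hk
  · rwa [← hfull, ← hfull]

theorem sum_indicator_eq_card_inter {ι : Type*} [DecidableEq ι] (A I : Finset ι) :
    ∑ i ∈ A, (if i ∈ I then (1 : ℝ) else 0) = (A ∩ I).card := by
  rw [sum_boole, filter_mem_eq_inter]

theorem sum_smul_indicator_eq_mul_card_inter {ι : Type*} [DecidableEq ι] (c : ℝ)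
    (A I : Finset ι) :
    ∑ i ∈ A, (c • fun j => if j ∈ I then (1 : ℝ) else 0) i = c * (A ∩ I).card := by
  simp only [Pi.smul_apply, smul_eq_mul, ← mul_sum, sum_indicator_eq_card_inter]

theorem exists_dotProduct_lt_of_notMem_convexHull {ι : Type*} [Fintype ι] {S : Set (ι → ℝ)}
    (hS : S.Finite) {x : ι → ℝ} (hx : x ∉ convexHull ℝ S) :
    ∃ c : ι → ℝ, ∀ y ∈ S, c ⬝ᵥ y < c ⬝ᵥ x := by
  obtain ⟨φ, b, hφ, hb⟩ := geometric_hahn_banach_closed_point (convex_convexHull ℝ S)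
    (hS.isCompact_convexHull (𝕜 := ℝ)).isClosed hx
  have hc : ∀ y, φ y = (fun i => φ fun j => if i = j then 1 else 0) ⬝ᵥ y := fun y => by
    conv_lhs => rw [pi_eq_sum_univ y]
    simp [dotProduct, mul_comm]
  exact ⟨_, fun y hy => hc y ▸ hc x ▸ (hφ y (subset_convexHull ℝ S hy)).trans hb⟩

def sccPolytope {ι : Type*} [Fintype ι] {n : ℕ} (U : ι → EuclideanSpace ℝ (Fin n)) :
    Set (ι → ℝ) :=
  {y | (∀ A : Finset ι, ∑ i ∈ A, y i ≤ ((U '' ↑A).finrank ℝ : ℝ) / n) ∧ ∑ i, y i = 1}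

section SccPolytope

variable {ι : Type*} [Fintype ι] {n : ℕ} {U : ι → EuclideanSpace ℝ (Fin n)} {y : ι → ℝ}

theorem convex_sccPolytope : Convex ℝ (sccPolytope U) := by
  rintro x ⟨hxA, hx⟩ y ⟨hyA, hy⟩ a b ha hb hab
  refine ⟨fun A => ?_, ?_⟩
  · simp only [Pi.add_apply, Pi.smul_apply, smul_eq_mul, sum_add_distrib, ← mul_sum]
    calc a * ∑ i ∈ A, x i + b * ∑ i ∈ A, y i
        ≤ a * ((U '' ↑A).finrank ℝ / n) + b * ((U '' ↑A).finrank ℝ / n) := by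
          gcongr
          exacts [hxA A, hyA A]
      _ = (U '' ↑A).finrank ℝ / n := by rw [← add_mul, hab, one_mul]
  · simp [sum_add_distrib, ← mul_sum, hx, hy, hab]

theorem sum_filter_mem_le_of_mem_sccPolytope (hy : y ∈ sccPolytope U)
    (L : Submodule ℝ (EuclideanSpace ℝ (Fin n))) :
    ∑ i ∈ univ.filter (fun i => U i ∈ L), y i ≤ (finrank ℝ L : ℝ) / n := by
  refine (hy.1 _).trans ?_
  gcongr
  exact finrank_image_le_finrank_of_forall_mem fun i hi => by simpa using hi

theorem sum_filter_mem_eq_of_isCompl (hn : 0 < n) (hy : y ∈ sccPolytope U)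
    {L L' : Submodule ℝ (EuclideanSpace ℝ (Fin n))} (hC : IsCompl L L')
    (hcover : ∀ i, U i ∈ L ∨ U i ∈ L') :
    ∑ i ∈ univ.filter (fun i => U i ∈ L), y i = (finrank ℝ L : ℝ) / n := by
  refine le_antisymm (sum_filter_mem_le_of_mem_sccPolytope hy L) ?_
  have hrest : ∑ i ∈ univ.filter (fun i => U i ∉ L), y i ≤ (finrank ℝ L' : ℝ) / n := by
    refine (hy.1 _).trans ?_
    gcongr
    exact finrank_image_le_finrank_of_forall_mem
      fun i hi => (hcover i).resolve_left (by simpa using hi)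
  have hdim : (finrank ℝ L : ℝ) + finrank ℝ L' = n := by
    exact_mod_cast (Submodule.finrank_add_eq_of_isCompl hC).trans finrank_euclideanSpace_fin
  have hsplit := sum_filter_add_sum_filter_not univ (fun i => U i ∈ L) y
  rw [hy.2] at hsplit
  rw [show (finrank ℝ L : ℝ) / n = 1 - finrank ℝ L' / n by
    rw [eq_sub_iff_add_eq, ← add_div, hdim, div_self (by positivity)]]
  linarith

end SccPolytope

theorem PosSpanning.span_range_eq_top {n m : ℕ} {U : Fin m → EuclideanSpace ℝ (Fin n)}
    (h : PosSpanning U) : span ℝ (Set.range U) = ⊤ :=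
  eq_top_iff.2 fun x _ => by
    obtain ⟨c, -, rfl⟩ := h x
    exact sum_mem fun i _ => smul_mem _ _ (subset_span (Set.mem_range_self i))

section MatroidPolytope

variable {n m : ℕ} {U : Fin m → EuclideanSpace ℝ (Fin n)}

theorem isBasisIndex_iff {I : Finset (Fin m)} :
    IsBasisIndex U I ↔ LinearIndepOn ℝ U ↑I ∧ span ℝ (U '' ↑I) = ⊤ := by
  refine ⟨fun h => ⟨?_, h.2⟩, fun h => ⟨?_, h.2⟩⟩
  · exact linearIndependent_of_top_le_span_of_card_eq_finrank
      (b := fun i : (I : Set (Fin m)) => U i) (by rw [← Set.image_eq_range, h.2]) (by simp [h.1])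
  · rw [h.1.card_eq_finrank_image, Set.finrank, h.2, finrank_top, finrank_euclideanSpace_fin]

theorem exists_isBasisIndex_superset (hU : span ℝ (Set.range U) = ⊤) {J : Finset (Fin m)}
    (hJ : LinearIndepOn ℝ U ↑J) : ∃ I, J ⊆ I ∧ IsBasisIndex U I := by
  obtain ⟨I, hJI, -, hI, hspan⟩ := exists_linearIndepOn_finset_extension hJ (subset_univ J)
  refine ⟨I, hJI, isBasisIndex_iff.2 ⟨hI, eq_top_iff.2 ?_⟩⟩
  rw [← hU, span_le]
  simpa using hspan

theorem exists_isBasisIndex_forall_card_inter_eq_finrank_image (hU : span ℝ (Set.range U) = ⊤)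
    (σ : Equiv.Perm (Fin m)) : ∃ I, IsBasisIndex U I ∧ ∀ k < m,
      (({i | (σ.symm i : ℕ) < k} : Finset (Fin m)) ∩ I).card =
        (U '' ↑({i | (σ.symm i : ℕ) < k} : Finset (Fin m))).finrank ℝ := by
  set A : ℕ → Finset (Fin m) := fun k => {i | (σ.symm i : ℕ) < k}
  have hA : Monotone A := fun k l hkl i => by simp only [A, mem_filter_univ]; omega
  obtain ⟨I, -, hI, hIA⟩ := exists_linearIndepOn_forall_subset_span_inter (K := ℝ) (v := U) hA m
  refine ⟨I, isBasisIndex_iff.2 ⟨hI, eq_top_iff.2 ?_⟩, fun k hk => ?_⟩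
  · have hAm : A m = univ := by ext i; simp [A]
    rw [← hU, span_le]
    simpa [hAm] using hIA m le_rfl
  · exact (hI.mono inter_subset_right).card_eq_finrank_image_of_subset_span inter_subset_left
      (hIA k hk.le)

theorem mem_matroidPolytope_of_forall_sum_le (hU : span ℝ (Set.range U) = ⊤) {x : Fin m → ℝ}
    (hle : ∀ A : Finset (Fin m), ∑ i ∈ A, x i ≤ (U '' ↑A).finrank ℝ) (hsum : ∑ i, x i = n) :
    x ∈ matroidPolytope U := by
  by_contra hx
  obtain ⟨c, hc⟩ := exists_dotProduct_lt_of_notMem_convexHull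
    ((Set.finite_range fun I : Finset (Fin m) => fun j => if j ∈ I then (1 : ℝ) else 0).subset
      (by rintro _ ⟨I, -, rfl⟩; exact ⟨I, rfl⟩)) hx
  -- the vertex of a basis chosen greedily in order of decreasing `c` beats `x`
  set σ := Tuple.sort (-c)
  have hσ : Antitone (c ∘ σ) := fun i j hij => by simpa using Tuple.monotone_sort (-c) hij
  obtain ⟨I, hI, hIA⟩ := exists_isBasisIndex_forall_card_inter_eq_finrank_image hU σ
  have hprefix : ∀ (g : Fin m → ℝ) k, ∑ i ∈ {i : Fin m | (i : ℕ) < k}, g (σ i) =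
      ∑ i ∈ ({i | (σ.symm i : ℕ) < k} : Finset (Fin m)), g i := by
    intro g k
    rw [sum_filter, sum_filter,
      ← Equiv.sum_comp σ (fun i => if (σ.symm i : ℕ) < k then g i else 0)]
    simp
  set v : Fin m → ℝ := fun j => if j ∈ I then 1 else 0
  refine (hc v ⟨I, hI, rfl⟩).not_ge ?_
  simp only [dotProduct]
  rw [← Equiv.sum_comp σ (fun i => c i * x i), ← Equiv.sum_comp σ (fun i => c i * v i)]
  refine Fin.sum_mul_le_sum_mul_of_antitone (u := x ∘ σ) (v := v ∘ σ) hσ (fun k hk => ?_) ?_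
  · simp only [Function.comp_apply]
    rw [hprefix x, hprefix v, sum_indicator_eq_card_inter, hIA k hk]
    exact hle _
  · simp only [Function.comp_apply]
    rw [Equiv.sum_comp σ x, Equiv.sum_comp σ v, hsum, sum_indicator_eq_card_inter]
    simp [hI.1]

theorem inv_smul_indicator_mem_sccPolytope (hn : 0 < n) {I : Finset (Fin m)}
    (hI : IsBasisIndex U I) :
    (n : ℝ)⁻¹ • (fun j => if j ∈ I then (1 : ℝ) else 0) ∈ sccPolytope U := by
  refine ⟨fun A => ?_, ?_⟩ <;> rw [sum_smul_indicator_eq_mul_card_inter, inv_mul_eq_div]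
  · gcongr
    exact (isBasisIndex_iff.1 hI).1.card_inter_le_finrank_image A
  · rw [univ_inter, hI.1, div_self (by positivity)]

theorem inv_smul_matroidPolytope_eq_sccPolytope (hn : 0 < n) (hU : span ℝ (Set.range U) = ⊤) :
    (n : ℝ)⁻¹ • matroidPolytope U = sccPolytope U := by
  refine Set.Subset.antisymm ?_ fun y hy => (Set.mem_inv_smul_set_iff₀ (by positivity) _ _).2 ?_
  · rw [matroidPolytope, ← convexHull_smul]
    refine convexHull_min ?_ convex_sccPolytope
    rintro _ ⟨_, ⟨I, hI, rfl⟩, rfl⟩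
    exact inv_smul_indicator_mem_sccPolytope hn hI
  · refine mem_matroidPolytope_of_forall_sum_le hU (fun A => ?_) ?_ <;>
      simp only [Pi.smul_apply, smul_eq_mul, ← mul_sum]
    · exact (le_div_iff₀' (by positivity)).1 (hy.1 A)
    · simp [hy.2]

end MatroidPolytope

theorem Finset.eq_of_subset_of_sum_le_of_pos {ι M : Type*} [AddCommMonoid M] [PartialOrder M]
    [IsOrderedCancelAddMonoid M] {s t : Finset ι} {f : ι → M}
    (hf : ∀ i, 0 < f i) (hst : s ⊆ t) (h : ∑ i ∈ t, f i ≤ ∑ i ∈ s, f i) : s = t :=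
  hst.antisymm fun i hi => by_contra fun his =>
    (sum_lt_sum_of_subset hst hi his (hf i) fun j _ _ => (hf j).le).not_ge h

section SubspaceConcentration

variable {n m : ℕ} {U : Fin m → EuclideanSpace ℝ (Fin n)} {γ : Fin m → ℝ}

theorem SCC.sum_filter_mem_le (hn : 0 < n) (h : SCC U γ) (hγ : ∑ i, γ i = 1)
    (L : Submodule ℝ (EuclideanSpace ℝ (Fin n))) :
    ∑ i ∈ univ.filter (fun i => U i ∈ L), γ i ≤ (finrank ℝ L : ℝ) / n := by
  rcases eq_or_ne L ⊤ with rfl | hL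
  · simp [hγ, div_self (by positivity : (n : ℝ) ≠ 0)]
  · exact h.1 L hL

theorem SCC.exists_isCompl (h : SCC U γ) {L : Submodule ℝ (EuclideanSpace ℝ (Fin n))}
    (heq : ∑ i ∈ univ.filter (fun i => U i ∈ L), γ i = (finrank ℝ L : ℝ) / n) :
    ∃ L', IsCompl L L' ∧ ∀ i, U i ∈ L ∨ U i ∈ L' := by
  rcases eq_or_ne L ⊤ with rfl | hL
  · exact ⟨⊥, isCompl_top_bot, fun _ => Or.inl mem_top⟩
  · exact (h.2 L hL).1 heq

theorem SCC.mem_sccPolytope (hn : 0 < n) (hγpos : ∀ i, 0 < γ i) (hγ : ∑ i, γ i = 1)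
    (h : SCC U γ) : γ ∈ sccPolytope U :=
  ⟨fun A => (sum_le_sum_of_subset_of_nonneg (subset_filter_mem_span_image ℝ U A)
    fun i _ _ => (hγpos i).le).trans (h.sum_filter_mem_le hn hγ _), hγ⟩

theorem SCC.sum_eq_of_mem_sccPolytope (hn : 0 < n) (hγpos : ∀ i, 0 < γ i) (hγ : ∑ i, γ i = 1)
    (h : SCC U γ) {A : Finset (Fin m)} (hA : ∑ i ∈ A, γ i = ((U '' ↑A).finrank ℝ : ℝ) / n)
    {y : Fin m → ℝ} (hy : y ∈ sccPolytope U) :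
    ∑ i ∈ A, y i = ((U '' ↑A).finrank ℝ : ℝ) / n := by
  have hAF := subset_filter_mem_span_image ℝ U A
  have hle := sum_le_sum_of_subset_of_nonneg hAF fun i _ _ => (hγpos i).le
  have hF := le_antisymm (h.sum_filter_mem_le hn hγ _) (hA ▸ hle)
  -- as `γ > 0`, the tight set `A` is the flat of `span (U '' A)`, a separator by (ii)
  obtain ⟨L', hC, hcover⟩ := h.exists_isCompl hF
  nth_rw 1 [eq_of_subset_of_sum_le_of_pos hγpos hAF (hF.trans hA.symm).le]
  exact sum_filter_mem_eq_of_isCompl hn hy hC hcover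

theorem SCC.mem_intrinsicInterior_sccPolytope (hn : 0 < n) (hγpos : ∀ i, 0 < γ i)
    (hγ : ∑ i, γ i = 1) (h : SCC U γ) : γ ∈ intrinsicInterior ℝ (sccPolytope U) := by
  have hγP := h.mem_sccPolytope hn hγpos hγ
  refine convex_sccPolytope.mem_intrinsicInterior_of_forall_exists_add_smul_sub_mem hγP
    fun y hy => ?_
  obtain ⟨ε, hε, hle⟩ := exists_pos_forall_add_smul_sub_le
    (fun A : Finset (Fin m) => ∑ i ∈ A, LinearMap.proj i)
    (fun A => ((U '' ↑A).finrank ℝ : ℝ) / n) (x := γ) (y := y) (by simpa using hγP.1)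
    fun A hA => by simpa using h.sum_eq_of_mem_sccPolytope hn hγpos hγ (by simpa using hA) hy
  refine ⟨ε, hε, fun A => by simpa using hle A, ?_⟩
  simp [sum_add_distrib, ← mul_sum, hγ, hy.2]

theorem exists_isCompl_of_forall_sum_filter_mem_eq (hn : 0 < n)
    (hU : span ℝ (Set.range U) = ⊤) {L : Submodule ℝ (EuclideanSpace ℝ (Fin n))}
    (hconst : ∀ y ∈ sccPolytope U,
      ∑ i ∈ univ.filter (fun i => U i ∈ L), y i = (finrank ℝ L : ℝ) / n) :
    ∃ L', IsCompl L L' ∧ ∀ i, U i ∈ L ∨ U i ∈ L' := by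
  set T := univ.filter (fun i => U i ∉ L)
  have hcover : ∀ i, U i ∈ L ∨ U i ∈ span ℝ (U '' ↑T) := fun i =>
    or_iff_not_imp_left.2 fun hi => subset_span ⟨i, by simpa [T] using hi, rfl⟩
  refine ⟨_, Submodule.isCompl_of_sup_eq_top_of_finrank_add_le ?_ ?_, hcover⟩
  · rw [eq_top_iff, ← hU, span_le, Set.range_subset_iff]
    exact fun i => (hcover i).elim (fun h => mem_sup_left h) fun h => mem_sup_right h
  -- count the elements of a basis extending a basis of `span T` on both sides of `L`
  obtain ⟨J, -, hJT, hJ, hJspan⟩ :=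
    exists_linearIndepOn_finset_extension (K := ℝ) (v := U) (by simp) (empty_subset T)
  obtain ⟨I, hJI, hI⟩ := exists_isBasisIndex_superset hU hJ
  have hLI : (I.filter fun i => U i ∈ L).card = finrank ℝ L := by
    have := hconst _ (inv_smul_indicator_mem_sccPolytope hn hI)
    rw [sum_smul_indicator_eq_mul_card_inter, inv_mul_eq_div, div_left_inj' (by positivity),
      filter_inter, univ_inter] at this
    exact_mod_cast this
  have hTI : finrank ℝ (span ℝ (U '' ↑T)) ≤ (I.filter fun i => U i ∉ L).card := by
    change (U '' ↑T).finrank ℝ ≤ _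
    rw [← hJ.card_eq_finrank_image_of_subset_span hJT hJspan]
    exact card_le_card fun i hi => mem_filter.2 ⟨hJI hi, (mem_filter.1 (hJT hi)).2⟩
  have hsplit := card_filter_add_card_filter_not (s := I) fun i => U i ∈ L
  rw [finrank_euclideanSpace_fin]
  have := hI.1
  omega

theorem scc_of_mem_intrinsicInterior_sccPolytope (hn : 0 < n) (hU : span ℝ (Set.range U) = ⊤)
    (h : γ ∈ intrinsicInterior ℝ (sccPolytope U)) : SCC U γ := by
  have hγP := intrinsicInterior_subset h
  refine ⟨fun L _ => sum_filter_mem_le_of_mem_sccPolytope hγP L, fun L _ => ⟨fun heq => ?_,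
    fun ⟨L', hC, hcover⟩ => sum_filter_mem_eq_of_isCompl hn hγP hC hcover⟩⟩
  refine exists_isCompl_of_forall_sum_filter_mem_eq hn hU fun y hy => ?_
  simpa [heq] using eq_of_mem_intrinsicInterior_of_forall_le
    (∑ i ∈ univ.filter (fun i => U i ∈ L), LinearMap.proj i) h
    (fun z hz => by simpa [heq] using sum_filter_mem_le_of_mem_sccPolytope hz L) hy

end SubspaceConcentration

theorem stmt_5_general (n m : ℕ) (hn : 0 < n) (U : Fin m → EuclideanSpace ℝ (Fin n))
    (hpos : PosSpanning U)
    (γ : Fin m → ℝ) (hγpos : ∀ i, 0 < γ i) (hγsum : ∑ i, γ i = 1) :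
    SCC U γ ↔ γ ∈ intrinsicInterior ℝ ((n : ℝ)⁻¹ • matroidPolytope U) := by
  rw [inv_smul_matroidPolytope_eq_sccPolytope hn hpos.span_range_eq_top]
  exact ⟨fun h => h.mem_intrinsicInterior_sccPolytope hn hγpos hγsum,
    scc_of_mem_intrinsicInterior_sccPolytope hn hpos.span_range_eq_top⟩

/-- `μ(U,γ)` satisfies the subspace concentration condition iff `γ` lies in the
relative interior of `P_scc(U) = (1/n)·P(M_U)`. -/
theorem stmt_5 (n m : ℕ) (hn : 0 < n) (U : Fin m → EuclideanSpace ℝ (Fin n))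
    (hunit : ∀ i, ‖U i‖ = 1) (hinj : Function.Injective U) (hpos : PosSpanning U)
    (γ : Fin m → ℝ) (hγpos : ∀ i, 0 < γ i) (hγsum : ∑ i, γ i = 1) :
    SCC U γ ↔ γ ∈ intrinsicInterior ℝ ((n : ℝ)⁻¹ • matroidPolytope U) :=
  stmt_5_general n m hn U hpos γ hγpos hγsum
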